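/- arXiv:2011.07091 — 2 statements merged into one kernel-verified Lean document; each statement's English description precedes it below -/
import Mathlib

section
/- For every natural number k ≥ 9, the least common multiple of the numbers 1, 2, ..., k is at least 2^k. -/
/-!
For `0 < k ≤ n`, the `p`-adic valuation of `k * C(n, k)` is at most `log_p n`: by Kummer it counts
the carries of `k + (n - k)` in base `p` plus the digits `i` with `p ^ i ∣ k`, and these never
coincide. Hence `k * C(n, k) ∣ lcm(1, …, n)`. Applied to `n * C(2n, n)` and to
`(2n + 1) * C(2n, n) = (n + 1) * C(2n + 1, n + 1)`, with `n` and `2n + 1` coprime, this gives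
`n (2n + 1) C(2n, n) ∣ lcm(1, …, 2n + 1)`, and `n C(2n, n) > 4 ^ n` for `n ≥ 4`.
-/

open Finset

namespace Nat

theorem factorization_mul_choose_le_log {p n k : ℕ} (hk : k ≠ 0) (hkn : k ≤ n) :
    (k * n.choose k).factorization p ≤ log p n := by
  by_cases hp : p.Prime
  swap
  · simp [factorization_eq_zero_of_not_prime _ hp]
  have hnb : n < p ^ (log p n + 1) := lt_pow_succ_log_self hp.one_lt n
  have hdisj : Disjoint {i ∈ Ico 1 (log p n + 1) | p ^ i ∣ k}
      {i ∈ Ico 1 (log p n + 1) | p ^ i ≤ k % p ^ i + (n - k) % p ^ i} := by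
    simp +contextual [disjoint_left, dvd_iff_mod_eq_zero, mod_lt _ (pow_pos hp.pos _)]
  rw [factorization_mul hk (choose_pos hkn).ne', Finsupp.add_apply,
    factorization_eq_card_pow_dvd_of_lt hp (pos_of_ne_zero hk) (hkn.trans_lt hnb),
    factorization_choose hp hkn (lt_add_one _), ← card_union_of_disjoint hdisj,
    ← filter_or]
  exact (card_filter_le _ _).trans_eq (card_Ico _ _)

theorem lcmUpto_dvd_lcmUpto {m n : ℕ} (h : m ≤ n) : lcmUpto m ∣ lcmUpto n :=
  lcm_mono (Icc_subset_Icc_right h)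

theorem mul_choose_dvd_lcmUpto {n k : ℕ} (hk : k ≠ 0) (hkn : k ≤ n) :
    k * n.choose k ∣ lcmUpto n := by
  rw [← factorization_le_iff_dvd (mul_ne_zero hk (choose_pos hkn).ne') (lcmUpto_ne_zero n)]
  intro p
  by_cases hp : p.Prime
  · rw [factorization_lcmUpto n hp]
    exact factorization_mul_choose_le_log hk hkn
  · simp [factorization_eq_zero_of_not_prime _ hp]

theorem mul_mul_centralBinom_dvd_lcmUpto {n : ℕ} (hn : n ≠ 0) :
    n * (2 * n + 1) * centralBinom n ∣ lcmUpto (2 * n + 1) := by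
  have h₁ : n * centralBinom n ∣ lcmUpto (2 * n + 1) :=
    (mul_choose_dvd_lcmUpto hn (by omega)).trans (lcmUpto_dvd_lcmUpto (by omega))
  have h₂ : (2 * n + 1) * centralBinom n ∣ lcmUpto (2 * n + 1) := by
    rw [centralBinom, add_one_mul_choose_eq, mul_comm]
    exact mul_choose_dvd_lcmUpto (succ_ne_zero n) (by omega)
  have hcop : Coprime n (2 * n + 1) := by simp [Coprime]
  have := lcm_dvd h₁ h₂
  rwa [lcm_mul_right, hcop.lcm_eq_mul] at this

end Nat

theorem nair_lcm_lower_bound (k : ℕ) (hk : 9 ≤ k) :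
    2 ^ k ≤ (Finset.Icc 1 k).lcm id := by
  obtain ⟨n, hn, hkn⟩ : ∃ n, 4 ≤ n ∧ 2 * n + 1 ≤ k ∧ k ≤ 2 * n + 2 := ⟨(k - 1) / 2, by omega⟩
  have hdvd : n * (2 * n + 1) * n.centralBinom ∣ Nat.lcmUpto k :=
    (Nat.mul_mul_centralBinom_dvd_lcmUpto (by omega)).trans (Nat.lcmUpto_dvd_lcmUpto hkn.1)
  calc 2 ^ k ≤ 2 ^ (2 * n + 2) := Nat.pow_le_pow_right two_pos hkn.2
    _ = 4 * 4 ^ n := by rw [pow_add, pow_mul]; ring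
    _ ≤ (2 * n + 1) * (n * n.centralBinom) :=
        Nat.mul_le_mul (by omega) (Nat.four_pow_lt_mul_centralBinom n hn).le
    _ = n * (2 * n + 1) * n.centralBinom := by ring
    _ ≤ Nat.lcmUpto k := Nat.le_of_dvd (Nat.lcmUpto_pos k) hdvd
end

section
/- Let f : [0, n] → ℤ satisfy |f(i+1) − f(i)| ≤ 1 for all i, let c : [0, n] → C be a coloring with a finite set C of colors of cardinality m ≥ 1, and let Z ≥ 1. If f(n) − f(0) > m · Z, then there exist indices 0 ≤ s < t ≤ n such that c(s) = c(t) and f(t) − f(s) = d · Z for some d ∈ [1, m]. -/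
lemma depump_ivt_aux (f : ℕ → ℤ) (v : ℤ) :
    ∀ j, (∀ i < j, |f (i + 1) - f i| ≤ 1) → f 0 ≤ v → v ≤ f j →
      ∃ i, i ≤ j ∧ f i = v := by
  intro j
  induction j with
  | zero => intro _ h1 h2; exact ⟨0, le_refl _, le_antisymm h1 h2⟩
  | succ j ih =>
    intro hstep h1 h2
    by_cases hv : v ≤ f j
    · obtain ⟨i, hi, hfi⟩ := ih (fun i hi => hstep i (hi.trans (Nat.lt_succ_self j))) h1 hv
      exact ⟨i, hi.trans (Nat.le_succ j), hfi⟩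
    · push_neg at hv
      have h3 := (abs_le.mp (hstep j (Nat.lt_succ_self j))).2
      exact ⟨j + 1, le_refl _, by omega⟩

theorem depumping_pigeonhole {C : Type*} [Fintype C] (n m : ℕ) (f : ℕ → ℤ)
    (c : ℕ → C) (Z : ℤ)
    (hstep : ∀ i < n, |f (i + 1) - f i| ≤ 1)
    (hm : Fintype.card C = m) (hm1 : 1 ≤ m) (hZ : 1 ≤ Z)
    (hbig : (m : ℤ) * Z < f n - f 0) :
    ∃ s t, s < t ∧ t ≤ n ∧ c s = c t ∧
      ∃ d : ℕ, 1 ≤ d ∧ d ≤ m ∧ f t - f s = (d : ℤ) * Z := by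
  -- each level f 0 + k*Z for k ≤ m is attained
  have H : ∀ k : ℕ, k ≤ m → ∃ i, i ≤ n ∧ f i = f 0 + (k : ℤ) * Z := by
    intro k hk
    apply depump_ivt_aux f _ n hstep
    · have : (0 : ℤ) ≤ (k : ℤ) * Z := mul_nonneg (by positivity) (by omega)
      omega
    · have hkm : (k : ℤ) * Z ≤ (m : ℤ) * Z :=
        mul_le_mul_of_nonneg_right (by exact_mod_cast hk) (by omega)
      omega
  -- first-hit indices
  have Hfin : ∀ k : Fin (m + 1), ∃ i, i ≤ n ∧ f i = f 0 + (k : ℤ) * Z :=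
    fun k => H k (Nat.lt_succ_iff.mp k.isLt)
  let g : Fin (m + 1) → ℕ := fun k => Nat.find (Hfin k)
  have hgle : ∀ k, g k ≤ n := fun k => (Nat.find_spec (Hfin k)).1
  have hgval : ∀ k, f (g k) = f 0 + (k : ℤ) * Z := fun k => (Nat.find_spec (Hfin k)).2
  -- strict monotonicity of first hits
  have hmono : ∀ a b : Fin (m + 1), a < b → g a < g b := by
    intro a b hab
    obtain ⟨i, hi, hfi⟩ : ∃ i, i ≤ g b ∧ f i = f 0 + (a : ℤ) * Z := by
      apply depump_ivt_aux f _ (g b) (fun i hi => hstep i (hi.trans_le (hgle b)))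
      · have : (0 : ℤ) ≤ (a : ℤ) * Z := mul_nonneg (by positivity) (by omega)
        omega
      · rw [hgval b]
        have : ((a : ℕ) : ℤ) * Z ≤ ((b : ℕ) : ℤ) * Z :=
          mul_le_mul_of_nonneg_right (by exact_mod_cast hab.le) (by omega)
        omega
    have hga : g a ≤ i := Nat.find_min' (Hfin a) ⟨hi.trans (hgle b), hfi⟩
    have hne : g a ≠ g b := by
      intro h
      have h1 := hgval a
      have h2 := hgval b
      rw [h] at h1
      have : ((a : ℕ) : ℤ) * Z = ((b : ℕ) : ℤ) * Z := by omega
      have hZ0 : Z ≠ 0 := by omega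
      have : ((a : ℕ) : ℤ) = ((b : ℕ) : ℤ) := mul_right_cancel₀ hZ0 this
      have : (a : ℕ) = (b : ℕ) := by exact_mod_cast this
      omega
    exact lt_of_le_of_ne (hga.trans hi) hne
  -- pigeonhole
  have hcard : Fintype.card C < Fintype.card (Fin (m + 1)) := by simp [hm]
  obtain ⟨a, b, hab, heq⟩ := Fintype.exists_ne_map_eq_of_card_lt (fun k => c (g k)) hcard
  wlog hlt : a < b generalizing a b
  · exact this b a hab.symm heq.symm (by omega)
  refine ⟨g a, g b, hmono a b hlt, hgle b, heq, (b : ℕ) - (a : ℕ), ?_, ?_, ?_⟩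
  · omega
  · omega
  · rw [hgval a, hgval b]
    have : (((b : ℕ) - (a : ℕ) : ℕ) : ℤ) = ((b : ℕ) : ℤ) - ((a : ℕ) : ℤ) := by
      have : (a : ℕ) ≤ (b : ℕ) := hlt.le
      push_cast [Nat.cast_sub this]
      ring
    rw [this]
    ring
end
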